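/- arXiv:math/0006219 — 3 statements merged into one kernel-verified Lean document; each statement's English description precedes it below -/
import Mathlib

section
/- Let $w$ be a set and $F \subseteq 2^w$. If $F$ is closed (i.e., $F = \mathrm{cl}(F)$), then every Boolean homomorphism from $\mathbb{B}_{(w,F)}$ to $\{0,1\}$ restricts on the generators to exactly one element of $F$; that is, the map $f \mapsto \hat f$ is a bijection between $F$ and the set of homomorphisms $\mathbb{B}_{(w,F)} \to \{0,1\}$. -/
variable {α : Type*} [BooleanAlgebra α]

/-- Membership in the Boolean subalgebra generated by `X`. -/
inductive BooleanGen (X : Set α) : α → Prop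
  | base {a : α} : a ∈ X → BooleanGen X a
  | bot : BooleanGen X ⊥
  | top : BooleanGen X ⊤
  | sup {a b : α} : BooleanGen X a → BooleanGen X b → BooleanGen X (a ⊔ b)
  | inf {a b : α} : BooleanGen X a → BooleanGen X b → BooleanGen X (a ⊓ b)
  | compl {a : α} : BooleanGen X a → BooleanGen X aᶜ

/-- The Boolean subalgebra generated by `X`, as a set. -/
def genBA (X : Set α) : Set α := {a | BooleanGen X a}

namespace genBA
variable {X : Set α}

instance : Max ↥(genBA X) := ⟨fun a b => ⟨a.1 ⊔ b.1, BooleanGen.sup a.2 b.2⟩⟩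
instance : Min ↥(genBA X) := ⟨fun a b => ⟨a.1 ⊓ b.1, BooleanGen.inf a.2 b.2⟩⟩
instance : Top ↥(genBA X) := ⟨⟨⊤, BooleanGen.top⟩⟩
instance : Bot ↥(genBA X) := ⟨⟨⊥, BooleanGen.bot⟩⟩
instance : Compl ↥(genBA X) := ⟨fun a => ⟨a.1ᶜ, BooleanGen.compl a.2⟩⟩
instance : SDiff ↥(genBA X) := ⟨fun a b => ⟨a.1 ⊓ b.1ᶜ, BooleanGen.inf a.2 (BooleanGen.compl b.2)⟩⟩
instance : HImp ↥(genBA X) := ⟨fun a b => ⟨a.1ᶜ ⊔ b.1, BooleanGen.sup (BooleanGen.compl a.2) b.2⟩⟩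

lemma coe_sdiff (a b : ↥(genBA X)) : ((a \ b : ↥(genBA X)) : α) = (a : α) \ (b : α) := by
  rw [sdiff_eq]; rfl

lemma coe_himp (a b : ↥(genBA X)) : ((a ⇨ b : ↥(genBA X)) : α) = (a : α) ⇨ (b : α) := by
  rw [himp_eq, sup_comm]; rfl

instance : BooleanAlgebra ↥(genBA X) :=
  Subtype.coe_injective.booleanAlgebra _ Iff.rfl Iff.rfl (fun _ _ => rfl) (fun _ _ => rfl) rfl rfl
    (fun _ => rfl) coe_sdiff coe_himp

end genBA

/-- The generator `x_i` of the algebra `B_(w,F)`, realized as a function on `F`. -/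
def xgen {w : Type*} (F : Set (w → Bool)) (i : w) : ↥F → Bool := fun f => f.1 i

/-- The algebra `B_(w,F)` of Definition 0.C, realized concretely as the Boolean
subalgebra of `F → Bool` generated by the evaluation functions `x_i`. -/
abbrev BwF (w : Type*) (F : Set (w → Bool)) : Set (↥F → Bool) :=
  genBA (Set.range (xgen F))

lemma xgen_mem {w : Type*} {F : Set (w → Bool)} (i : w) : xgen F i ∈ BwF w F :=
  BooleanGen.base ⟨i, rfl⟩

/-- The closure `cl(F)` of a family `F ⊆ 2^w`. -/
def clF {w : Type*} (F : Set (w → Bool)) : Set (w → Bool) :=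
  {g | ∀ u : Finset w, ∃ f ∈ F, ∀ x ∈ u, f x = g x}

def literal (b : Bool) (a : α) : α := bif b then a else aᶜ

lemma map_literal_eq_true_iff (φ : BoundedLatticeHom α Bool) (b : Bool) (a : α) :
    φ (literal b a) = true ↔ φ a = b := by
  cases b <;> simp [literal]

lemma map_finset_inf_literal_eq_true_iff {ι : Type*} (φ : BoundedLatticeHom α Bool)
    (u : Finset ι) (b : ι → Bool) (a : ι → α) :
    φ (u.inf fun i => literal (b i) (a i)) = true ↔ ∀ i ∈ u, φ (a i) = b i := by
  rw [map_finset_inf, ← top_eq_true, Finset.inf_eq_top_iff]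
  exact forall₂_congr fun i _ => map_literal_eq_true_iff φ (b i) (a i)

namespace BwF

variable {w : Type*} {F : Set (w → Bool)}

def evalHom (g : ↥F) : BoundedLatticeHom ↥(BwF w F) Bool where
  toFun a := a.1 g
  map_sup' _ _ := rfl
  map_inf' _ _ := rfl
  map_top' := rfl
  map_bot' := rfl

lemma exists_apply_eq_true_of_map_eq_true (φ : BoundedLatticeHom ↥(BwF w F) Bool)
    {b : ↥(BwF w F)} (hb : φ b = true) : ∃ g : ↥F, (b : ↥F → Bool) g = true := by
  by_contra! h
  have hbot : b = ⊥ := Subtype.ext <| funext fun g => show _ = false by simpa using h g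
  simp [hbot] at hb

/-- The restriction of a homomorphism to the generators lies in `cl(F)`: on a finite `u`, the
conjunction of the literals it makes true is nonzero, hence nonzero at some point of `F`. -/
lemma restrict_mem_clF (φ : BoundedLatticeHom ↥(BwF w F) Bool) :
    (fun α => φ ⟨xgen F α, xgen_mem α⟩) ∈ clF F := fun u => by
  set f := fun α => φ ⟨xgen F α, xgen_mem α⟩
  set b : ↥(BwF w F) := u.inf fun α => literal (f α) ⟨xgen F α, xgen_mem α⟩
  obtain ⟨g, hg⟩ := exists_apply_eq_true_of_map_eq_true φ
    ((map_finset_inf_literal_eq_true_iff φ _ _ _).2 fun _ _ => rfl : φ b = true)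
  exact ⟨g.1, g.2, (map_finset_inf_literal_eq_true_iff (evalHom g) _ _ _).1 hg⟩

end BwF

/-- If `F` is closed (`cl(F) = F`), then `f ↦ f̂` is a bijection between `F` and the set of
Boolean homomorphisms `B_(w,F) → Bool`: every `f ∈ F` extends to a homomorphism sending each
generator `x_α` to `f α`, and conversely every homomorphism restricts on the generators to
exactly one element of `F`. -/
theorem hom_bijection_of_closed {w : Type*} (F : Set (w → Bool)) (hcl : clF F = F) :
    (∀ f ∈ F, ∃ φ : BoundedLatticeHom ↥(BwF w F) Bool,
        ∀ α : w, φ ⟨xgen F α, xgen_mem α⟩ = f α) ∧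
    (∀ φ : BoundedLatticeHom ↥(BwF w F) Bool,
        ∃! f : w → Bool, f ∈ F ∧ ∀ α : w, φ ⟨xgen F α, xgen_mem α⟩ = f α) := by
  refine ⟨fun f hf => ⟨BwF.evalHom ⟨f, hf⟩, fun _ => rfl⟩, fun φ => ?_⟩
  have hmem : (fun α => φ ⟨xgen F α, xgen_mem α⟩) ∈ F := hcl.subset (BwF.restrict_mem_clF φ)
  exact ⟨_, ⟨hmem, fun _ => rfl⟩, fun g hg => funext fun α => (hg.2 α).symm⟩
end

section
/- Let $w \subseteq w^*$ be sets, $F \subseteq 2^w$, $F^* \subseteq 2^{w^*}$. If every $f \in F$ extends to some $g \in F^*$ and every $g \in F^*$ restricts into $\mathrm{cl}(F)$ (i.e., $g\restriction w \in \mathrm{cl}(F)$), then the natural map $x_\alpha \mapsto x_\alpha$ ($\alpha \in w$) embeds $\mathbb{B}_{(w,F)}$ as a subalgebra of $\mathbb{B}_{(w^*,F^*)}$. -/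
variable {α : Type*} [BooleanAlgebra α]

/-!
Fix an extension `E f ∈ F*` of each `f ∈ F`. Precomposition with `E` is a Boolean
homomorphism `(F* → Bool) → (F → Bool)` sending `x_α` to `x_α` for `α ∈ w`, so it maps
the subalgebra of `B_(w*,F*)` generated by these `x_α` onto `B_(w,F)`. It is injective
there: an element of that subalgebra depends on only finitely many coordinates `α ∈ w`,
and since `g ↾ w ∈ cl(F)` for `g ∈ F*`, some `E f` agrees with `g` on them. The inverse
of this isomorphism, followed by the inclusion into `B_(w*,F*)`, is the embedding.
-/

namespace genBA

variable {β : Type*} [BooleanAlgebra β] {X : Set α} {Y : Set β}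

theorem mapsTo {π : BoundedLatticeHom α β} (h : Set.MapsTo π X Y) :
    Set.MapsTo π (genBA X) (genBA Y) := by
  intro a ha
  induction ha with
  | base hx => exact .base (h hx)
  | bot => rw [map_bot]; exact .bot
  | top => rw [map_top]; exact .top
  | sup _ _ iha ihb => rw [map_sup]; exact .sup iha ihb
  | inf _ _ iha ihb => rw [map_inf]; exact .inf iha ihb
  | compl _ iha => rw [map_compl]; exact .compl iha

theorem surjOn {π : BoundedLatticeHom α β} (h : Set.SurjOn π X Y) :
    Set.SurjOn π (genBA X) (genBA Y) := by
  intro b hb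
  induction hb with
  | base hy => obtain ⟨a, ha, rfl⟩ := h hy; exact ⟨a, .base ha, rfl⟩
  | bot => exact ⟨⊥, .bot, map_bot π⟩
  | top => exact ⟨⊤, .top, map_top π⟩
  | sup _ _ iha ihb =>
    obtain ⟨a, ha, rfl⟩ := iha
    obtain ⟨b, hb, rfl⟩ := ihb
    exact ⟨a ⊔ b, .sup ha hb, map_sup π a b⟩
  | inf _ _ iha ihb =>
    obtain ⟨a, ha, rfl⟩ := iha
    obtain ⟨b, hb, rfl⟩ := ihb
    exact ⟨a ⊓ b, .inf ha hb, map_inf π a b⟩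
  | compl _ iha =>
    obtain ⟨a, ha, rfl⟩ := iha
    exact ⟨aᶜ, .compl ha, map_compl π a⟩

def mapHom (π : BoundedLatticeHom α β) (h : Set.MapsTo π X Y) :
    BoundedLatticeHom (genBA X) (genBA Y) where
  toFun a := ⟨π a, mapsTo h a.2⟩
  map_sup' a b := Subtype.ext (map_sup π (a : α) (b : α))
  map_inf' a b := Subtype.ext (map_inf π (a : α) (b : α))
  map_top' := Subtype.ext (map_top π)
  map_bot' := Subtype.ext (map_bot π)

theorem mapHom_injective {π : BoundedLatticeHom α β} (h : Set.MapsTo π X Y)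
    (hπ : Set.InjOn π (genBA X)) : Function.Injective (mapHom π h) :=
  fun a b hab => Subtype.ext (hπ a.2 b.2 (congrArg Subtype.val hab))

theorem mapHom_surjective {π : BoundedLatticeHom α β} (h : Set.MapsTo π X Y)
    (hs : Set.SurjOn π X Y) : Function.Surjective (mapHom π h) := by
  intro b
  obtain ⟨a, ha, hab⟩ := surjOn hs b.2
  exact ⟨⟨a, ha⟩, Subtype.ext hab⟩

theorem exists_finset_eq_of_mem {I S : Type*} (x : I → S → β) {b : S → β}
    (hb : b ∈ genBA (Set.range x)) :
    ∃ u : Finset I, ∀ s t, (∀ i ∈ u, x i s = x i t) → b s = b t := by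
  classical
  induction hb with
  | base hy =>
    obtain ⟨i, rfl⟩ := hy
    exact ⟨{i}, fun s t h => h i (Finset.mem_singleton_self i)⟩
  | bot => exact ⟨∅, fun _ _ _ => rfl⟩
  | top => exact ⟨∅, fun _ _ _ => rfl⟩
  | sup _ _ iha ihb =>
    obtain ⟨u, hu⟩ := iha
    obtain ⟨v, hv⟩ := ihb
    refine ⟨u ∪ v, fun s t h => ?_⟩
    simp only [Pi.sup_apply]
    rw [hu s t fun i hi => h i (Finset.mem_union_left v hi),
      hv s t fun i hi => h i (Finset.mem_union_right u hi)]
  | inf _ _ iha ihb =>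
    obtain ⟨u, hu⟩ := iha
    obtain ⟨v, hv⟩ := ihb
    refine ⟨u ∪ v, fun s t h => ?_⟩
    simp only [Pi.inf_apply]
    rw [hu s t fun i hi => h i (Finset.mem_union_left v hi),
      hv s t fun i hi => h i (Finset.mem_union_right u hi)]
  | compl _ iha =>
    obtain ⟨u, hu⟩ := iha
    exact ⟨u, fun s t h => by simp only [Pi.compl_apply, hu s t h]⟩

end genBA

def precompHom {S T : Type*} (β : Type*) [BooleanAlgebra β] (E : S → T) :
    BoundedLatticeHom (T → β) (S → β) where
  toFun b := b ∘ E
  map_sup' _ _ := rfl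
  map_inf' _ _ := rfl
  map_top' := rfl
  map_bot' := rfl

theorem injOn_precompHom_genBA {I S T β : Type*} [BooleanAlgebra β] (y : I → T → β)
    (E : S → T) (hdense : ∀ t (u : Finset I), ∃ s, ∀ i ∈ u, y i (E s) = y i t) :
    Set.InjOn (precompHom β E) (genBA (Set.range y)) := by
  classical
  intro b hb b' hb' hbb'
  obtain ⟨u, hu⟩ := genBA.exists_finset_eq_of_mem y hb
  obtain ⟨u', hu'⟩ := genBA.exists_finset_eq_of_mem y hb'
  funext t
  obtain ⟨s, hs⟩ := hdense t (u ∪ u')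
  calc b t = b (E s) := (hu _ _ fun i hi => hs i (Finset.mem_union_left u' hi)).symm
    _ = b' (E s) := congrFun hbb' s
    _ = b' t := hu' _ _ fun i hi => hs i (Finset.mem_union_right u hi)

/-- Proposition 0.D(3): if `w ⊆ w*`, every `f ∈ F` extends to some `g ∈ F*`, and every
`g ∈ F*` restricts into `cl(F)`, then the natural map `x_α ↦ x_α` (for `α ∈ w`) embeds
`B_(w,F)` as a subalgebra of `B_(w*,F*)`. -/
theorem subalgebra_embedding {W : Type*} (w wstar : Set W) (hsub : w ⊆ wstar)
    (F : Set (↥w → Bool)) (Fstar : Set (↥wstar → Bool))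
    (hext : ∀ f ∈ F, ∃ g ∈ Fstar, ∀ x : ↥w, g (Set.inclusion hsub x) = f x)
    (hres : ∀ g ∈ Fstar, (fun x : ↥w => g (Set.inclusion hsub x)) ∈ clF F) :
    ∃ φ : BoundedLatticeHom ↥(BwF ↥w F) ↥(BwF ↥wstar Fstar),
      Function.Injective φ ∧
      ∀ x : ↥w, φ ⟨xgen F x, xgen_mem x⟩ =
        ⟨xgen Fstar (Set.inclusion hsub x), xgen_mem (Set.inclusion hsub x)⟩ := by
  choose G hG_mem hG using hext
  let E : ↥F → ↥Fstar := fun f => ⟨G f f.2, hG_mem f f.2⟩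
  let y : ↥w → ↥Fstar → Bool := fun i => xgen Fstar (Set.inclusion hsub i)
  have hEy : ∀ i, precompHom Bool E (y i) = xgen F i := fun i => funext fun f => hG f f.2 i
  have hdense : ∀ g (u : Finset ↥w), ∃ f, ∀ i ∈ u, y i (E f) = y i g := by
    intro g u
    obtain ⟨f, hf, hfg⟩ := hres g g.2 u
    exact ⟨⟨f, hf⟩, fun i hi => (hG f hf i).trans (hfg i hi)⟩
  have hmaps : Set.MapsTo (precompHom Bool E) (Set.range y) (Set.range (xgen F)) := by
    rintro _ ⟨i, rfl⟩; exact ⟨i, (hEy i).symm⟩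
  have hsurj : Set.SurjOn (precompHom Bool E) (Set.range y) (Set.range (xgen F)) := by
    rintro _ ⟨i, rfl⟩; exact ⟨y i, ⟨i, rfl⟩, hEy i⟩
  have hinj := genBA.mapHom_injective hmaps (injOn_precompHom_genBA y E hdense)
  let e := OrderIso.ofSurjective (orderEmbeddingOfInjective _ hinj)
    (genBA.mapHom_surjective hmaps hsurj)
  have hincl : Set.MapsTo (BoundedLatticeHom.id _) (Set.range y) (Set.range (xgen Fstar)) := by
    rintro _ ⟨i, rfl⟩; exact ⟨_, rfl⟩
  refine ⟨(genBA.mapHom _ hincl).comp e.symm, ?_, fun i => ?_⟩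
  · exact (genBA.mapHom_injective hincl (Set.injOn_id _)).comp e.symm.injective
  · have he_symm : e.symm ⟨xgen F i, xgen_mem i⟩ = ⟨y i, .base ⟨i, rfl⟩⟩ :=
      e.symm_apply_eq.2 (Subtype.ext (hEy i).symm : _ = genBA.mapHom _ hmaps _)
    exact congrArg (genBA.mapHom _ hincl) he_symm
end

section
/- Let $w$ be a set, $F \subseteq 2^w$, $j \in w$, and $v \subseteq w \setminus \{j\}$ finite. If there exist $f_0, f_1 \in F$ with $f_0\restriction v = f_1\restriction v$, $f_0(j) = 0$, and $f_1(j) = 1$, then in the algebra $\mathbb{B}_{(w,F)}$ the element $x_j$ does not belong to the subalgebra generated by $\{x_i : i \in v\}$. -/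
variable {α : Type*} [BooleanAlgebra α]

theorem BooleanGen.apply_eq_apply {ι : Type*} {X : Set (ι → α)} {p q : ι}
    (hX : ∀ g ∈ X, g p = g q) {a : ι → α} (ha : BooleanGen X a) : a p = a q := by
  induction ha with
  | base hg => exact hX _ hg
  | bot => rfl
  | top => rfl
  | sup _ _ iha ihb => simp only [Pi.sup_apply, iha, ihb]
  | inf _ _ iha ihb => simp only [Pi.inf_apply, iha, ihb]
  | compl _ ih => simp only [Pi.compl_apply, ih]

theorem xgen_not_mem_of_split_general {w : Type*} (F : Set (w → Bool)) (j : w) (v : Set w)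
    (f₀ f₁ : w → Bool) (hf₀ : f₀ ∈ F) (hf₁ : f₁ ∈ F)
    (hagree : ∀ i ∈ v, f₀ i = f₁ i) (h₀ : f₀ j = false) (h₁ : f₁ j = true) :
    xgen F j ∉ genBA {g | ∃ i ∈ v, g = xgen F i} := by
  intro hmem
  have hsplit : xgen F j ⟨f₀, hf₀⟩ = xgen F j ⟨f₁, hf₁⟩ :=
    BooleanGen.apply_eq_apply (by rintro _ ⟨i, hi, rfl⟩; exact hagree i hi) hmem
  simp only [xgen, h₀, h₁, Bool.false_eq_true] at hsplit

/-- If `v ⊆ w \ {j}` is finite and there are `f₀, f₁ ∈ F` agreeing on `v` with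
`f₀(j) = 0` and `f₁(j) = 1`, then in `B_(w,F)` the element `x_j` does not belong to
the subalgebra generated by `{x_i : i ∈ v}`. -/
theorem xgen_not_mem_of_split {w : Type*} (F : Set (w → Bool)) (j : w) (v : Set w)
    (hvfin : v.Finite) (hjv : j ∉ v)
    (f₀ f₁ : w → Bool) (hf₀ : f₀ ∈ F) (hf₁ : f₁ ∈ F)
    (hagree : ∀ i ∈ v, f₀ i = f₁ i) (h₀ : f₀ j = false) (h₁ : f₁ j = true) :
    xgen F j ∉ genBA {g | ∃ i ∈ v, g = xgen F i} :=
  xgen_not_mem_of_split_general F j v f₀ f₁ hf₀ hf₁ hagree h₀ h₁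
end
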